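/- arXiv:1804.06744 — 3 statements merged into one kernel-verified Lean document; each statement's English description precedes it below -/
import Mathlib

section
/- Suppose L(ρ∞) = 0 for the Lindbladian L, and A satisfies [H,A] = λA with λ real, and [L_k,A] = [L_k†,A] = 0 for all k. Then L(A ρ∞ A†) = 0, i.e., A ρ∞ A† is also a stationary state of the Lindbladian. -/
/-!
Conjugation by `A` intertwines the Lindbladian with itself: `L(A ρ Aᴴ) = A L(ρ) Aᴴ`.
In the dissipative part, `A` and `Aᴴ` simply move past every `L_k` and `L_kᴴ`. In the
Hamiltonian part, `[H, A] = λ A` forces `[H, Aᴴ] = -λ Aᴴ` because `H` is Hermitian and `λ` is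
real, and the two contributions `±λ A ρ Aᴴ` cancel.
-/

open Matrix

/-- The Lindbladian `L(ρ) = -i[H,ρ] + Σ_k (2 L_k ρ L_kᴴ - L_kᴴL_k ρ - ρ L_kᴴL_k)`. -/
noncomputable def lindbladian {N K : ℕ} (H : Matrix (Fin N) (Fin N) ℂ)
    (L : Fin K → Matrix (Fin N) (Fin N) ℂ) (ρ : Matrix (Fin N) (Fin N) ℂ) :
    Matrix (Fin N) (Fin N) ℂ :=
  (-Complex.I) • (H * ρ - ρ * H)
    + ∑ k, ((2 : ℂ) • (L k * ρ * (L k)ᴴ) - ((L k)ᴴ * L k * ρ + ρ * ((L k)ᴴ * L k)))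

theorem mul_mul_mul_mul_of_commute {M : Type*} [Semigroup M] {A B L R : M}
    (hA : Commute A L) (hB : Commute B R) (X : M) :
    L * (A * X * B) * R = A * (L * X * R) * B := by
  simp only [← mul_assoc, ← hA.eq]
  simp only [mul_assoc, hB.eq]

section Commutator

variable {S R : Type*} [CommSemiring S] [Ring R]

theorem commutator_mul_mul_of_commutator_eq_smul [Algebra S R] {H A B : R} {μ : S}
    (hA : H * A - A * H = μ • A) (hB : H * B - B * H = -(μ • B)) (X : R) :
    H * (A * X * B) - A * X * B * H = A * (H * X - X * H) * B := by
  have hLeibniz : H * (A * X * B) - A * X * B * H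
      = (H * A - A * H) * X * B + A * (H * X - X * H) * B + A * X * (H * B - B * H) := by
    noncomm_ring
  rw [hLeibniz, hA, hB, smul_mul_assoc, smul_mul_assoc, mul_neg, mul_smul_comm]
  abel

theorem commutator_star_eq_neg_star_smul [StarRing S] [StarRing R] [Module S R] [StarModule S R]
    {H A : R} {μ : S} (hH : IsSelfAdjoint H) (hA : H * A - A * H = μ • A) :
    H * star A - star A * H = -(star μ • star A) := by
  rw [← star_smul, ← hA, star_sub, star_mul, star_mul, hH.star_eq, neg_sub]

end Commutator

theorem lindbladian_mul_mul_of_commute {N K : ℕ} {H A B : Matrix (Fin N) (Fin N) ℂ}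
    {L : Fin K → Matrix (Fin N) (Fin N) ℂ} {μ : ℂ}
    (hA : H * A - A * H = μ • A) (hB : H * B - B * H = -(μ • B))
    (hAL : ∀ k, Commute A (L k)) (hALdag : ∀ k, Commute A (L k)ᴴ)
    (hBL : ∀ k, Commute B (L k)) (hBLdag : ∀ k, Commute B (L k)ᴴ)
    (ρ : Matrix (Fin N) (Fin N) ℂ) :
    lindbladian H L (A * ρ * B) = A * lindbladian H L ρ * B := by
  have hDissipator : ∀ k, (2 : ℂ) • (L k * (A * ρ * B) * (L k)ᴴ)
        - ((L k)ᴴ * L k * (A * ρ * B) + A * ρ * B * ((L k)ᴴ * L k))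
      = A * ((2 : ℂ) • (L k * ρ * (L k)ᴴ) - ((L k)ᴴ * L k * ρ + ρ * ((L k)ᴴ * L k))) * B := by
    intro k
    have hLeft := mul_mul_mul_mul_of_commute ((hALdag k).mul_right (hAL k)) (Commute.one_right B) ρ
    have hRight :=
      mul_mul_mul_mul_of_commute (Commute.one_right A) ((hBLdag k).mul_right (hBL k)) ρ
    simp only [one_mul, mul_one] at hLeft hRight
    rw [mul_mul_mul_mul_of_commute (hAL k) (hBLdag k), hLeft, hRight]
    simp only [mul_sub, sub_mul, mul_add, add_mul, mul_smul_comm, smul_mul_assoc]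
  unfold lindbladian
  simp only [hDissipator, commutator_mul_mul_of_commutator_eq_smul hA hB, ← Finset.mul_sum,
    ← Finset.sum_mul, mul_add, add_mul, mul_smul_comm, smul_mul_assoc]

/-- If `L(ρ∞) = 0`, `[H,A] = λ • A` with `λ` real, and `A` commutes with every
`L_k` and `L_kᴴ`, then `A ρ∞ Aᴴ` is also a stationary state: `L(A ρ∞ Aᴴ) = 0`. -/
theorem stationary_of_conjugated {N K : ℕ}
    (H A : Matrix (Fin N) (Fin N) ℂ) (L : Fin K → Matrix (Fin N) (Fin N) ℂ)
    (ρinf : Matrix (Fin N) (Fin N) ℂ) (lam : ℝ)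
    (hH : H.IsHermitian)
    (hstat : lindbladian H L ρinf = 0)
    (hComm : H * A - A * H = (lam : ℂ) • A)
    (hL : ∀ k, L k * A = A * L k)
    (hLdag : ∀ k, (L k)ᴴ * A = A * (L k)ᴴ) :
    lindbladian H L (A * ρinf * Aᴴ) = 0 := by
  have hAdag : H * Aᴴ - Aᴴ * H = -((lam : ℂ) • Aᴴ) := by
    simpa only [star_eq_conjTranspose, Complex.star_def, Complex.conj_ofReal]
      using commutator_star_eq_neg_star_smul hH.isSelfAdjoint hComm
  have hAL (k : Fin K) : Commute A (L k) := (hL k).symm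
  have hALdag (k : Fin K) : Commute A (L k)ᴴ := (hLdag k).symm
  have hAdagL (k : Fin K) : Commute Aᴴ (L k) := by
    simpa only [star_eq_conjTranspose, conjTranspose_conjTranspose] using (hALdag k).star_star
  rw [lindbladian_mul_mul_of_commute hComm hAdag hAL hALdag hAdagL (fun k ↦ (hAL k).star_star),
    hstat, mul_zero, zero_mul]
end

section
/- Let |φ_n⟩ and |φ_m⟩ be unit vectors such that L_k |φ_n⟩ = λ_{k,n} |φ_n⟩ and L_k |φ_m⟩ = λ_{k,m} |φ_m⟩ for all k, and such that each |φ_j⟩⟨φ_j| (j = n, m) is stationary. Then the Lindbladian applied to |φ_n⟩⟨φ_m| equals a scalar multiple of |φ_n⟩⟨φ_m|. -/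
open Matrix

lemma mul_vecMulVec' {N : ℕ} (M : Matrix (Fin N) (Fin N) ℂ) (a b : Fin N → ℂ) :
    M * vecMulVec a b = vecMulVec (M.mulVec a) b := by
  ext i j
  simp [Matrix.mul_apply, vecMulVec_apply, Matrix.mulVec, dotProduct,
    Finset.sum_mul, mul_assoc]

lemma vecMulVec_mul' {N : ℕ} (M : Matrix (Fin N) (Fin N) ℂ) (a b : Fin N → ℂ) :
    vecMulVec a b * M = vecMulVec a (Matrix.vecMul b M) := by
  ext i j
  simp [Matrix.mul_apply, vecMulVec_apply, Matrix.vecMul, dotProduct,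
    Finset.mul_sum, mul_assoc]

lemma vecMulVec_smul_left' {N : ℕ} (c : ℂ) (a b : Fin N → ℂ) :
    vecMulVec (c • a) b = c • vecMulVec a b := by
  ext i j; simp [vecMulVec_apply, mul_assoc]

lemma vecMulVec_smul_right' {N : ℕ} (c : ℂ) (a b : Fin N → ℂ) :
    vecMulVec a (c • b) = c • vecMulVec a b := by
  ext i j; simp [vecMulVec_apply]; ring

lemma vecMulVec_sub_left' {N : ℕ} (a a' b : Fin N → ℂ) :
    vecMulVec (a - a') b = vecMulVec a b - vecMulVec a' b := by
  ext i j; simp [vecMulVec_apply, sub_mul]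

lemma vecMulVec_add_right' {N : ℕ} (a b b' : Fin N → ℂ) :
    vecMulVec a (b + b') = vecMulVec a b + vecMulVec a b' := by
  ext i j; simp [vecMulVec_apply, mul_add]

/-- If `φn` and `φm` are unit vectors that are simultaneous eigenvectors of all
the `L k` and of the effective operator `iH + Σ_k L_kᴴL_k`, and each `|φj⟩⟨φj|` is stationary,
then the Lindbladian maps the coherence `|φn⟩⟨φm|` to a scalar multiple of itself. -/
theorem lindbladian_coherence_scalar {N K : ℕ}
    (H : Matrix (Fin N) (Fin N) ℂ) (L : Fin K → Matrix (Fin N) (Fin N) ℂ)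
    (φn φm : Fin N → ℂ) (lamn lamm : Fin K → ℂ) (μn μm : ℂ)
    (hH : H.IsHermitian)
    (hφn : dotProduct (star φn) φn = 1)
    (hφm : dotProduct (star φm) φm = 1)
    (hLn : ∀ k, (L k).mulVec φn = lamn k • φn)
    (hLm : ∀ k, (L k).mulVec φm = lamm k • φm)
    (hEffn : (Complex.I • H + ∑ k, (L k)ᴴ * L k).mulVec φn = μn • φn)
    (hEffm : (Complex.I • H + ∑ k, (L k)ᴴ * L k).mulVec φm = μm • φm)
    (hstatn : lindbladian H L (vecMulVec φn (star φn)) = 0)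
    (hstatm : lindbladian H L (vecMulVec φm (star φm)) = 0) :
    ∃ c : ℂ, lindbladian H L (vecMulVec φn (star φm)) = c • vecMulVec φn (star φm) := by
  set A : Matrix (Fin N) (Fin N) ℂ := ∑ k, (L k)ᴴ * L k with hA
  set ρ : Matrix (Fin N) (Fin N) ℂ := vecMulVec φn (star φm) with hρ
  have hAn : A.mulVec φn = μn • φn - Complex.I • H.mulVec φn := by
    have h := hEffn
    rw [Matrix.add_mulVec, Matrix.smul_mulVec] at h
    linear_combination (norm := module) h
  have hAm : A.mulVec φm = μm • φm - Complex.I • H.mulVec φm := by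
    have h := hEffm
    rw [Matrix.add_mulVec, Matrix.smul_mulVec] at h
    linear_combination (norm := module) h
  -- products
  have h1 : H * ρ = vecMulVec (H.mulVec φn) (star φm) := mul_vecMulVec' H φn (star φm)
  have h2 : ρ * H = vecMulVec φn (star (H.mulVec φm)) := by
    rw [hρ, vecMulVec_mul']
    congr 1
    rw [Matrix.star_mulVec, hH.eq]
  have h3 : ∀ k, L k * ρ * (L k)ᴴ = (lamn k * star (lamm k)) • ρ := by
    intro k
    rw [hρ, mul_vecMulVec', hLn k, vecMulVec_mul',
      show star φm ᵥ* (L k)ᴴ = star (L k *ᵥ φm) from (Matrix.star_mulVec _ _).symm, hLm k,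
      star_smul, vecMulVec_smul_left', vecMulVec_smul_right', smul_smul]
  have h4 : A * ρ = vecMulVec (A.mulVec φn) (star φm) := mul_vecMulVec' A φn (star φm)
  have h5 : ρ * A = vecMulVec φn (star (A.mulVec φm)) := by
    have hAH : Aᴴ = A := by
      rw [hA, Matrix.conjTranspose_sum]
      exact Finset.sum_congr rfl fun k _ => by
        rw [Matrix.conjTranspose_mul, Matrix.conjTranspose_conjTranspose]
    rw [hρ, vecMulVec_mul']
    congr 1
    rw [Matrix.star_mulVec, hAH]
  refine ⟨(∑ k, 2 * (lamn k * star (lamm k))) - μn - star μm, ?_⟩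
  have hsum1 : ∑ k, (L k)ᴴ * L k * ρ = A * ρ := by
    rw [hA, Finset.sum_mul]
  have hsum2 : ∑ k, ρ * ((L k)ᴴ * L k) = ρ * A := by
    rw [hA, Finset.mul_sum]
  unfold lindbladian
  have expand : ∑ k, ((2 : ℂ) • (L k * ρ * (L k)ᴴ) - ((L k)ᴴ * L k * ρ + ρ * ((L k)ᴴ * L k)))
      = (∑ k, (2 * (lamn k * star (lamm k))) • ρ) - (A * ρ + ρ * A) := by
    rw [← hsum1, ← hsum2, Finset.sum_sub_distrib, Finset.sum_add_distrib]
    congr 1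
    exact Finset.sum_congr rfl fun k _ => by rw [h3 k, smul_smul]
  rw [expand, h1, h2, h4, h5, hAn, hAm]
  rw [star_sub, star_smul, star_smul, vecMulVec_sub_left',
    vecMulVec_smul_left', vecMulVec_smul_left']
  have h6 : vecMulVec φn (star μm • star φm - star Complex.I • star (H.mulVec φm))
      = star μm • ρ - star Complex.I • vecMulVec φn (star (H.mulVec φm)) := by
    rw [sub_eq_add_neg, ← neg_smul, vecMulVec_add_right', vecMulVec_smul_right',
      vecMulVec_smul_right', neg_smul, ← sub_eq_add_neg, hρ]
  rw [h6, ← Finset.sum_smul, Complex.star_def, Complex.conj_I]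
  module
end

section
/- Let |φ⟩ be a unit vector satisfying L_k|φ⟩ = λ_k|φ⟩ for all k and (iH + Σ_k L_k†L_k)|φ⟩ = μ|φ⟩ with Re(μ) = Σ_k |λ_k|². Then ρ = |φ⟩⟨φ| is a stationary state: L(ρ) = 0. -/
/-!
Writing `G = iH + Σ_k L_kᴴL_k`, the Lindbladian of a Hermitian `H` is
`ρ ↦ Σ_k 2 L_k ρ L_kᴴ - (Gρ + ρGᴴ)`. On `ρ = |φ⟩⟨φ|` with `L_k φ = λ_k φ` and `Gφ = μφ` every
term is a multiple of `ρ`: `L_k ρ L_kᴴ = |λ_k|² ρ`, `Gρ = μρ` and `ρGᴴ = μ̄ρ`, so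
`L(ρ) = (2 Σ_k |λ_k|² - 2 Re μ) ρ = 0`.
-/

open Matrix

section RankOne

variable {n R : Type*} [Fintype n] [CommRing R] [StarRing R]

theorem vecMulVec_star_mul_conjTranspose (φ : n → R) (M : Matrix n n R) :
    vecMulVec φ (star φ) * Mᴴ = vecMulVec φ (star (M *ᵥ φ)) := by
  rw [vecMulVec_mul, star_mulVec]

variable {M : Matrix n n R} {φ : n → R} {a : R}

theorem mul_vecMulVec_star_of_mulVec_eq_smul (h : M *ᵥ φ = a • φ) :
    M * vecMulVec φ (star φ) = a • vecMulVec φ (star φ) := by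
  rw [mul_vecMulVec, h, smul_vecMulVec]

theorem vecMulVec_star_mul_conjTranspose_of_mulVec_eq_smul (h : M *ᵥ φ = a • φ) :
    vecMulVec φ (star φ) * Mᴴ = star a • vecMulVec φ (star φ) := by
  rw [vecMulVec_star_mul_conjTranspose, h, star_smul, vecMulVec_smul]

theorem mul_vecMulVec_star_mul_conjTranspose_of_mulVec_eq_smul (h : M *ᵥ φ = a • φ) :
    M * vecMulVec φ (star φ) * Mᴴ = (a * star a) • vecMulVec φ (star φ) := by
  rw [mul_vecMulVec_star_of_mulVec_eq_smul h, smul_mul,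
    vecMulVec_star_mul_conjTranspose_of_mulVec_eq_smul h, smul_smul]

end RankOne

theorem lindbladian_eq_sum_sub_effective {N K : ℕ} {H : Matrix (Fin N) (Fin N) ℂ}
    (hH : H.IsHermitian) (L : Fin K → Matrix (Fin N) (Fin N) ℂ) (ρ : Matrix (Fin N) (Fin N) ℂ) :
    lindbladian H L ρ = ∑ k, (2 : ℂ) • (L k * ρ * (L k)ᴴ)
      - ((Complex.I • H + ∑ k, (L k)ᴴ * L k) * ρ
        + ρ * (Complex.I • H + ∑ k, (L k)ᴴ * L k)ᴴ) := by
  have hG : (Complex.I • H + ∑ k, (L k)ᴴ * L k)ᴴ = (-Complex.I) • H + ∑ k, (L k)ᴴ * L k := by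
    simp [conjTranspose_sum, hH.eq]
  rw [hG, lindbladian, Finset.sum_sub_distrib, Finset.sum_add_distrib, add_mul, mul_add,
    Finset.sum_mul, Finset.mul_sum, Matrix.smul_mul, Matrix.mul_smul]
  module

theorem pure_stationary_state_criterion_general {N K : ℕ}
    (H : Matrix (Fin N) (Fin N) ℂ) (L : Fin K → Matrix (Fin N) (Fin N) ℂ)
    (φ : Fin N → ℂ) (lam : Fin K → ℂ) (μ : ℂ)
    (hH : H.IsHermitian)
    (hL : ∀ k, (L k).mulVec φ = lam k • φ)
    (hEff : (Complex.I • H + ∑ k, (L k)ᴴ * L k).mulVec φ = μ • φ)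
    (hRe : μ.re = ∑ k, Complex.normSq (lam k)) :
    lindbladian H L (vecMulVec φ (star φ)) = 0 := by
  have hJump k := mul_vecMulVec_star_mul_conjTranspose_of_mulVec_eq_smul (hL k)
  have hRate : ∑ k, (2 : ℂ) * (lam k * star (lam k)) - (μ + star μ) = 0 := by
    simp only [Complex.star_def, Complex.mul_conj, Complex.add_conj, hRe]
    push_cast
    rw [Finset.mul_sum]
    ring
  rw [lindbladian_eq_sum_sub_effective hH, mul_vecMulVec_star_of_mulVec_eq_smul hEff,
    vecMulVec_star_mul_conjTranspose_of_mulVec_eq_smul hEff]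
  simp only [hJump, smul_smul, ← Finset.sum_smul, ← add_smul, ← sub_smul, hRate, zero_smul]

/-- Kraus et al., Theorem 1, sufficiency. If the unit vector `φ` satisfies
`L_k φ = λ_k • φ` for all `k` and `(iH + Σ_k L_kᴴL_k) φ = μ • φ` with
`Re μ = Σ_k |λ_k|²`, then `ρ = |φ⟩⟨φ|` is stationary: `L(ρ) = 0`. -/
theorem pure_stationary_state_criterion {N K : ℕ}
    (H : Matrix (Fin N) (Fin N) ℂ) (L : Fin K → Matrix (Fin N) (Fin N) ℂ)
    (φ : Fin N → ℂ) (lam : Fin K → ℂ) (μ : ℂ)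
    (hH : H.IsHermitian)
    (hφ : dotProduct (star φ) φ = 1)
    (hL : ∀ k, (L k).mulVec φ = lam k • φ)
    (hEff : (Complex.I • H + ∑ k, (L k)ᴴ * L k).mulVec φ = μ • φ)
    (hRe : μ.re = ∑ k, Complex.normSq (lam k)) :
    lindbladian H L (vecMulVec φ (star φ)) = 0 :=
  pure_stationary_state_criterion_general H L φ lam μ hH hL hEff hRe
end
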